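/- arXiv:1404.0242 — 5 statements merged into one kernel-verified Lean document; each statement's English description precedes it below -/
import Mathlib

section
/- If v ∈ H, v ≠ 0, λ ∈ ℂ and M v = λ v, then √C v ≠ 0 and (C ∘ O)(√C v) = λ (√C v); that is, every eigenvalue of M is an eigenvalue of C O with eigenvector √C v lying in the range of √C. -/
/-- Let `H` be a complex Hilbert space, `C` a positive injective continuous linear operator
with positive square root `√C`, `O` a self-adjoint continuous linear operator, and
`M := √C ∘ O ∘ √C`. If `v ≠ 0` and `M v = λ v`, then `√C v ≠ 0` and
`(C ∘ O)(√C v) = λ (√C v)`: every eigenvalue of `M` is an eigenvalue of `C O` with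
eigenvector `√C v` lying in the range of `√C`. -/
theorem stmt_2 {H : Type*} [NormedAddCommGroup H] [InnerProductSpace ℂ H] [CompleteSpace H]
    (C sqrtC O : H →L[ℂ] H)
    (hC : C.IsPositive) (hCinj : Function.Injective C)
    (hsqrt : sqrtC.IsPositive) (hsqrtsq : sqrtC ∘L sqrtC = C)
    (hO : IsSelfAdjoint O)
    (v : H) (hv : v ≠ 0) (lam : ℂ)
    (heig : (sqrtC ∘L O ∘L sqrtC) v = lam • v) :
    sqrtC v ≠ 0 ∧ (C ∘L O) (sqrtC v) = lam • sqrtC v := by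
  have hinj : Function.Injective sqrtC := by
    intro x y hxy
    apply hCinj
    rw [← hsqrtsq]
    simp [hxy]
  constructor
  · intro h
    exact hv (hinj (by simpa using h))
  · have : (C ∘L O) (sqrtC v) = sqrtC ((sqrtC ∘L O ∘L sqrtC) v) := by
      rw [← hsqrtsq]; rfl
    rw [this, heig, map_smul]
end

section
/- The series S := Σ_i λ_i t_i² converges almost surely, the infinite product Π_i (1 − 2cλ_i)^{−1/2} converges to a finite positive value, and E[exp(c S)] = Π_i (1 − 2cλ_i)^{−1/2} < ∞. -/
/-!
Write `w_i = c λ_i`. For a standard Gaussian `t`, `E[exp (w t²)] = (1 - 2w)^(-1/2)` when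
`2w < 1`, so by independence the partial sums `Σ_{i<n} w_i t_i²` have exponential moments equal
to the partial products. Since `Σ |w_i| E[t_i²] < ∞` the series converges almost surely, and the
product converges since `Σ log (1 - 2w_i)` does. Dominated convergence passes to the limit; the
dominating function `exp (Σ w_i⁺ t_i²)` is integrable by Fatou's lemma, as its partial
exponential moments are the partial products of factors `(1 - 2w_i⁺)^(-1/2) ≥ 1`, hence bounded
by the full product.
-/

open MeasureTheory ProbabilityTheory Filter Topology Real Finset
open scoped ENNReal NNReal

lemma hasProd_one_sub_rpow {ι : Type*} {a : ι → ℝ} (ha : Summable a) (ha1 : ∀ i, a i < 1)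
    (p : ℝ) : HasProd (fun i => (1 - a i) ^ p) (exp (p * ∑' i, log (1 - a i))) := by
  have hlog : Summable fun i => log (1 - a i) := by
    simpa [sub_eq_add_neg] using Real.summable_log_one_add_of_summable ha.neg
  refine ((hlog.hasSum.mul_left p).rexp).congr_fun fun i => ?_
  rw [Function.comp_apply, rpow_def_of_pos (sub_pos.2 (ha1 i)), mul_comm]

lemma prod_range_le_of_hasProd {f : ℕ → ℝ} {a : ℝ} (h : HasProd f a) (hf : ∀ i, 1 ≤ f i)
    (n : ℕ) : ∏ i ∈ range n, f i ≤ a := by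
  refine Monotone.ge_of_tendsto (monotone_nat_of_le_succ fun n => ?_) h.tendsto_prod_nat n
  rw [prod_range_succ]
  exact le_mul_of_one_le_right (prod_nonneg fun i _ => zero_le_one.trans (hf i)) (hf n)

lemma integrable_of_tendsto_of_integral_norm_le {α : Type*} [MeasurableSpace α] {μ : Measure α}
    {G : ℕ → α → ℝ} {f : α → ℝ} {B : ℝ} (hG : ∀ n, Integrable (G n) μ)
    (hB : ∀ n, ∫ x, ‖G n x‖ ∂μ ≤ B)
    (hlim : ∀ᵐ x ∂μ, Tendsto (fun n => G n x) atTop (𝓝 (f x))) : Integrable f μ := by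
  refine ⟨aestronglyMeasurable_of_tendsto_ae _ (fun n => (hG n).1) hlim, ?_⟩
  have hGB : ∀ n, ∫⁻ x, ‖G n x‖ₑ ∂μ ≤ ENNReal.ofReal B := fun n => by
    rw [← ofReal_integral_norm_eq_lintegral_enorm (hG n)]
    exact ENNReal.ofReal_le_ofReal (hB n)
  calc ∫⁻ x, ‖f x‖ₑ ∂μ = ∫⁻ x, liminf (fun n => ‖G n x‖ₑ) atTop ∂μ :=
        lintegral_congr_ae (by filter_upwards [hlim] with x hx using hx.enorm.liminf_eq.symm)
    _ ≤ liminf (fun n => ∫⁻ x, ‖G n x‖ₑ ∂μ) atTop :=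
        lintegral_liminf_le' fun n => (hG n).1.aemeasurable.enorm
    _ ≤ ENNReal.ofReal B := liminf_le_of_frequently_le' (Frequently.of_forall hGB)
    _ < ∞ := ENNReal.ofReal_lt_top

lemma mgf_sq_gaussianReal {v : ℝ≥0} {a : ℝ} (ha : 2 * a * v < 1) :
    mgf (fun x => x ^ 2) (gaussianReal 0 v) a = (1 - 2 * a * v) ^ (-(1 / 2) : ℝ) := by
  rcases eq_or_ne v 0 with rfl | hv
  · simp [gaussianReal_zero_var, mgf]
  have hb : 0 < 1 - 2 * a * v := by linarith
  have hpdf : ∀ x, gaussianPDFReal 0 v x • exp (a * x ^ 2)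
      = (√(2 * π * v))⁻¹ * exp (-((1 - 2 * a * v) / (2 * v)) * x ^ 2) := by
    intro x
    rw [gaussianPDFReal, smul_eq_mul, mul_assoc, ← exp_add]
    congr 2
    field_simp
    ring
  rw [mgf, integral_gaussianReal_eq_integral_smul hv]
  simp_rw [hpdf, integral_const_mul, integral_gaussian]
  rw [show π / ((1 - 2 * a * v) / (2 * v)) = 2 * π * v / (1 - 2 * a * v) by field_simp,
    sqrt_div' _ hb.le, rpow_neg hb.le, ← sqrt_eq_rpow]
  field_simp

section RandomSeries

variable {Ω : Type*} [MeasurableSpace Ω] {P : Measure Ω}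

lemma ae_summable_mul_sq {ι : Type*} [Countable ι] {t : ι → Ω → ℝ} {ν : Measure ℝ}
    (htmeas : ∀ i, Measurable (t i)) (htlaw : ∀ i, P.map (t i) = ν)
    (hν : Integrable (fun x => x ^ 2) ν) {w : ι → ℝ} (hw : Summable w) :
    ∀ᵐ ω ∂P, Summable fun i => w i * t i ω ^ 2 := by
  have hnorm : ∀ i, eLpNorm (fun ω => w i * t i ω ^ 2) 1 P
      = ‖w i‖ₑ * eLpNorm (fun x : ℝ => x ^ 2) 1 ν := fun i => by
    rw [← htlaw i, eLpNorm_map_measure (by fun_prop) (htmeas i).aemeasurable]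
    exact eLpNorm_const_smul (w i) (fun ω => t i ω ^ 2) 1 P
  have hfin : ∑' i, eLpNorm (fun ω => w i * t i ω ^ 2) 1 P ≠ ∞ := by
    simp_rw [hnorm, ENNReal.tsum_mul_right]
    exact ENNReal.mul_ne_top (tsum_enorm_ne_top_iff_summable_norm.2 hw.norm)
      (memLp_one_iff_integrable.2 hν).eLpNorm_ne_top
  filter_upwards [summable_norm_of_tsum_eLpNorm_ne_top le_rfl
    (fun i => (by fun_prop : Measurable _).aestronglyMeasurable) hfin] with ω hω
  exact hω.of_norm

lemma mgf_sq_of_map_eq_gaussianReal {X : Ω → ℝ} (hX : Measurable X) {v : ℝ≥0}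
    (hlaw : P.map X = gaussianReal 0 v) {a : ℝ} (ha : 2 * a * v < 1) :
    mgf (fun ω => X ω ^ 2) P a = (1 - 2 * a * v) ^ (-(1 / 2) : ℝ) := by
  rw [← mgf_sq_gaussianReal ha, ← hlaw, mgf_map hX.aemeasurable (by fun_prop)]
  rfl

lemma integral_exp_sum_mul_sq {ι : Type*} {t : ι → Ω → ℝ}
    (htmeas : ∀ i, Measurable (t i)) (htlaw : ∀ i, P.map (t i) = gaussianReal 0 1)
    (htindep : iIndepFun t P) {w : ι → ℝ} (hw : ∀ i, 2 * w i < 1) (s : Finset ι) :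
    ∫ ω, exp (∑ i ∈ s, w i * t i ω ^ 2) ∂P
      = ∏ i ∈ s, (1 - 2 * w i) ^ (-(1 / 2) : ℝ) := by
  have hindep : iIndepFun (fun i ω => w i * t i ω ^ 2) P :=
    htindep.comp (fun i x => w i * x ^ 2) fun i => by fun_prop
  have hmgf := hindep.mgf_sum (t := 1) (fun i => by fun_prop) s
  simp only [mgf, one_mul, Finset.sum_apply] at hmgf
  rw [hmgf]
  refine prod_congr rfl fun i _ => ?_
  simpa only [mgf, NNReal.coe_one, mul_one] using
    mgf_sq_of_map_eq_gaussianReal (htmeas i) (htlaw i) (a := w i) (by simpa using hw i)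

lemma integrable_exp_sum_mul_sq {ι : Type*} {t : ι → Ω → ℝ}
    (htmeas : ∀ i, Measurable (t i)) (htlaw : ∀ i, P.map (t i) = gaussianReal 0 1)
    (htindep : iIndepFun t P) {w : ι → ℝ} (hw : ∀ i, 2 * w i < 1) (s : Finset ι) :
    Integrable (fun ω => exp (∑ i ∈ s, w i * t i ω ^ 2)) P := by
  -- a non-integrable function has integral `0`
  refine Integrable.of_integral_ne_zero ?_
  rw [integral_exp_sum_mul_sq htmeas htlaw htindep hw]
  exact (prod_pos fun i _ => rpow_pos_of_pos (by linarith [hw i]) _).ne'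

lemma integrable_exp_tsum_mul_sq_of_nonneg {t : ℕ → Ω → ℝ}
    (htmeas : ∀ i, Measurable (t i)) (htlaw : ∀ i, P.map (t i) = gaussianReal 0 1)
    (htindep : iIndepFun t P) {w : ℕ → ℝ}
    (hw0 : ∀ i, 0 ≤ w i) (hw : Summable w) (hw1 : ∀ i, 2 * w i < 1) :
    Integrable (fun ω => exp (∑' i, w i * t i ω ^ 2)) P := by
  have hprod := hasProd_one_sub_rpow (hw.mul_left 2) hw1 (-(1 / 2))
  have hfactor : ∀ i, 1 ≤ (1 - 2 * w i) ^ (-(1 / 2) : ℝ) := fun i =>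
    one_le_rpow_of_pos_of_le_one_of_nonpos (by linarith [hw1 i]) (by linarith [hw0 i])
      (by norm_num)
  have hbound : ∀ n, ∫ ω, ‖exp (∑ i ∈ range n, w i * t i ω ^ 2)‖ ∂P
      ≤ ∏' i, (1 - 2 * w i) ^ (-(1 / 2) : ℝ) := fun n => by
    simp_rw [Real.norm_eq_abs, abs_exp]
    rw [integral_exp_sum_mul_sq htmeas htlaw htindep hw1]
    exact prod_range_le_of_hasProd hprod.multipliable.hasProd hfactor n
  refine integrable_of_tendsto_of_integral_norm_le
    (fun n => integrable_exp_sum_mul_sq htmeas htlaw htindep hw1 (range n)) hbound ?_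
  filter_upwards [ae_summable_mul_sq htmeas htlaw (memLp_id_gaussianReal 2).integrable_sq hw]
    with ω hω
  exact (continuous_exp.tendsto _).comp hω.hasSum.tendsto_sum_nat

lemma integrable_exp_tsum_mul_sq_and_integral_eq {t : ℕ → Ω → ℝ}
    (htmeas : ∀ i, Measurable (t i)) (htlaw : ∀ i, P.map (t i) = gaussianReal 0 1)
    (htindep : iIndepFun t P) {w : ℕ → ℝ} (hw : Summable w) (hw1 : ∀ i, 2 * w i < 1) :
    Integrable (fun ω => exp (∑' i, w i * t i ω ^ 2)) P ∧
      ∫ ω, exp (∑' i, w i * t i ω ^ 2) ∂P = ∏' i, (1 - 2 * w i) ^ (-(1 / 2) : ℝ) := by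
  have hsq := (memLp_id_gaussianReal (μ := 0) (v := 1) 2).integrable_sq
  set wpos : ℕ → ℝ := fun i => max (w i) 0
  have hwpos : Summable wpos :=
    hw.abs.of_nonneg_of_le (fun i => le_max_right _ _) fun i =>
      max_le (le_abs_self _) (abs_nonneg _)
  have hwpos1 : ∀ i, 2 * wpos i < 1 := fun i => by
    rcases max_cases (w i) 0 with ⟨h, -⟩ | ⟨h, -⟩ <;> simp only [wpos, h] <;>
      linarith [hw1 i]
  have hg := integrable_exp_tsum_mul_sq_of_nonneg htmeas htlaw htindep
    (fun i => le_max_right _ _) hwpos hwpos1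
  have hbound : ∀ᵐ ω ∂P, ∀ n, ‖exp (∑ i ∈ range n, w i * t i ω ^ 2)‖
      ≤ exp (∑' i, wpos i * t i ω ^ 2) := by
    filter_upwards [ae_summable_mul_sq htmeas htlaw hsq hwpos] with ω hω n
    rw [Real.norm_eq_abs, abs_exp, exp_le_exp]
    calc ∑ i ∈ range n, w i * t i ω ^ 2 ≤ ∑ i ∈ range n, wpos i * t i ω ^ 2 :=
          sum_le_sum fun i _ => mul_le_mul_of_nonneg_right (le_max_left _ _) (sq_nonneg _)
      _ ≤ ∑' i, wpos i * t i ω ^ 2 :=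
          hω.sum_le_tsum _ fun i _ => mul_nonneg (le_max_right _ _) (sq_nonneg _)
  have hlim : ∀ᵐ ω ∂P, Tendsto (fun n => exp (∑ i ∈ range n, w i * t i ω ^ 2)) atTop
      (𝓝 (exp (∑' i, w i * t i ω ^ 2))) := by
    filter_upwards [ae_summable_mul_sq htmeas htlaw hsq hw] with ω hω
    exact (continuous_exp.tendsto _).comp hω.hasSum.tendsto_sum_nat
  have hmeas :
      ∀ n, AEStronglyMeasurable (fun ω => exp (∑ i ∈ range n, w i * t i ω ^ 2)) P :=
    fun n => (integrable_exp_sum_mul_sq htmeas htlaw htindep hw1 (range n)).1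
  refine ⟨hg.mono' (aestronglyMeasurable_of_tendsto_ae _ hmeas hlim) ?_, ?_⟩
  · filter_upwards [hbound, hlim] with ω hbound hlim
    exact le_of_tendsto' hlim.norm hbound
  · refine tendsto_nhds_unique (tendsto_integral_of_dominated_convergence _ hmeas hg
      (ae_all_iff.1 hbound) hlim) ?_
    simp_rw [integral_exp_sum_mul_sq htmeas htlaw htindep hw1]
    exact (hasProd_one_sub_rpow (hw.mul_left 2) hw1 _).multipliable.hasProd.tendsto_prod_nat

end RandomSeries

theorem stmt_6_general
    {Ω : Type*} [MeasurableSpace Ω] (P : Measure Ω)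
    (t : ℕ → Ω → ℝ) (htmeas : ∀ i, Measurable (t i))
    (htlaw : ∀ i, P.map (t i) = gaussianReal 0 1)
    (htindep : iIndepFun t P)
    (lam : ℕ → ℝ) (hlam : Summable fun i => |lam i|)
    (c : ℝ) (hc : (⨆ i, 2 * c * lam i) < 1) :
    (∀ᵐ ω ∂P, Summable fun i => lam i * t i ω ^ 2) ∧
    Multipliable (fun i => (1 - 2 * c * lam i) ^ (-(1 / 2) : ℝ)) ∧
    0 < ∏' i, (1 - 2 * c * lam i) ^ (-(1 / 2) : ℝ) ∧
    Integrable (fun ω => Real.exp (c * ∑' i, lam i * t i ω ^ 2)) P ∧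
    ∫ ω, Real.exp (c * ∑' i, lam i * t i ω ^ 2) ∂P
      = ∏' i, (1 - 2 * c * lam i) ^ (-(1 / 2) : ℝ) := by
  have hsum : Summable fun i => c * lam i := hlam.of_abs.mul_left c
  have hbdd : BddAbove (Set.range fun i => 2 * c * lam i) :=
    (hlam.of_abs.mul_left (2 * c)).tendsto_atTop_zero.bddAbove_range
  have hlt : ∀ i, 2 * (c * lam i) < 1 := fun i =>
    mul_assoc 2 c (lam i) ▸ (le_ciSup hbdd i).trans_lt hc
  have hprod := hasProd_one_sub_rpow (hsum.mul_left 2) hlt (-(1 / 2))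
  obtain ⟨hint, hval⟩ :=
    integrable_exp_tsum_mul_sq_and_integral_eq htmeas htlaw htindep hsum hlt
  have hS : ∀ ω, c * ∑' i, lam i * t i ω ^ 2 = ∑' i, c * lam i * t i ω ^ 2 := fun ω => by
    simp_rw [← tsum_mul_left, mul_assoc]
  simp_rw [← mul_assoc] at hprod hint hval
  simp_rw [hS]
  exact ⟨ae_summable_mul_sq htmeas htlaw (memLp_id_gaussianReal 2).integrable_sq hlam.of_abs,
    hprod.multipliable, hprod.tprod_eq ▸ exp_pos _, hint, hval⟩

/-- Let `(t i)` be i.i.d. standard real Gaussian random variables, `(λ i)` absolutely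
summable reals, and `c` real with `sup_i 2cλ_i < 1`. Then `S = Σ_i λ_i t_i²` converges
almost surely, the infinite product `Π_i (1 − 2cλ_i)^(−1/2)` converges to a finite positive
value, and `E[exp(c S)] = Π_i (1 − 2cλ_i)^(−1/2) < ∞`. -/
theorem stmt_6
    {Ω : Type*} [MeasurableSpace Ω] (P : Measure Ω) [IsProbabilityMeasure P]
    (t : ℕ → Ω → ℝ) (htmeas : ∀ i, Measurable (t i))
    (htlaw : ∀ i, P.map (t i) = gaussianReal 0 1)
    (htindep : iIndepFun t P)
    (lam : ℕ → ℝ) (hlam : Summable fun i => |lam i|)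
    (c : ℝ) (hc : (⨆ i, 2 * c * lam i) < 1) :
    (∀ᵐ ω ∂P, Summable fun i => lam i * t i ω ^ 2) ∧
    Multipliable (fun i => (1 - 2 * c * lam i) ^ (-(1 / 2) : ℝ)) ∧
    0 < ∏' i, (1 - 2 * c * lam i) ^ (-(1 / 2) : ℝ) ∧
    Integrable (fun ω => Real.exp (c * ∑' i, lam i * t i ω ^ 2)) P ∧
    ∫ ω, Real.exp (c * ∑' i, lam i * t i ω ^ 2) ∂P
      = ∏' i, (1 - 2 * c * lam i) ^ (-(1 / 2) : ℝ) :=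
  stmt_6_general P t htmeas htlaw htindep lam hlam c hc
end

section
/- For every a > 0 and every u > 0, P( Σ_{i,j=1}^g G_{ij} t_i t_j < a and Σ_{i ≥ 1} λ_i t_i² > u ) ≤ C₂(a) · exp( −(1/λ⁺ + 1/λ′) u / 4 ), where C₂(a) = exp( (1 + λ⁺/λ′) a / (4 μ̃) ) · Π_{i > g} (1 − (1/λ⁺ + 1/λ′) λ_i / 2)^{−1/2}, and this infinite product converges. -/
/-!
Chernoff bound with parameter `θ = (1/λ⁺ + 1/λ′)/4`. On the event, the quadratic-form
condition and `G ≥ μ̃` give `∑_{i<g} λ_i t_i² ≤ λ⁺ a / μ̃`, so the tail `∑_{i≥g} λ_i t_i²`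
exceeds `u - λ⁺ a / μ̃`. The tail is a series of independent terms whose exponential moments
are the Gaussian integrals `E exp(θ λ_i t_i²) = (1 - 2θλ_i)^(-1/2)`, finite because
`2θλ_i ≤ (1 + λ′/λ⁺)/2 < 1`; Markov's inequality for `exp(θ · tail)`, with Fatou's lemma
passing from partial products to the infinite product, gives the bound.
-/

open MeasureTheory ProbabilityTheory Real Filter Finset
open scoped ENNReal NNReal Topology

lemma lintegral_ofReal_exp_mul_sq_gaussianReal {v : ℝ≥0} (hv : v ≠ 0) {c : ℝ}
    (hc : 2 * c * v < 1) :
    ∫⁻ x, ENNReal.ofReal (exp (c * x ^ 2)) ∂gaussianReal 0 v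
      = ENNReal.ofReal ((1 - 2 * c * v) ^ (-(1 / 2) : ℝ)) := by
  have hv₀ : (0 : ℝ) < v := by positivity
  have hb : 0 < 1 / (2 * v) - c := by
    rw [sub_pos, lt_div_iff₀ (by positivity)]
    linarith
  have hdensity : ∀ x : ℝ, gaussianPDF 0 v x * ENNReal.ofReal (exp (c * x ^ 2))
      = ENNReal.ofReal ((√(2 * π * v))⁻¹ * exp (-(1 / (2 * v) - c) * x ^ 2)) := by
    intro x
    rw [gaussianPDF, ← ENNReal.ofReal_mul (gaussianPDFReal_nonneg 0 v x), gaussianPDFReal,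
      mul_assoc, ← exp_add]
    congr 3
    field_simp
    ring
  rw [gaussianReal_of_var_ne_zero 0 hv, lintegral_withDensity_eq_lintegral_mul₀
      (measurable_gaussianPDF 0 v).aemeasurable (by fun_prop)]
  simp only [Pi.mul_apply, hdensity]
  rw [← ofReal_integral_eq_lintegral_ofReal ((integrable_exp_neg_mul_sq hb).const_mul _)
      (ae_of_all _ fun x => by positivity), integral_const_mul, integral_gaussian]
  have hquot : π / (1 / (2 * v) - c) = 2 * π * v / (1 - 2 * c * v) := by
    field_simp
  rw [hquot, sqrt_div' _ (by linarith), ← mul_div_assoc, inv_mul_cancel₀ (by positivity),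
    rpow_neg (by linarith), sqrt_eq_rpow, one_div]

lemma lintegral_ofReal_exp_mul_sq_of_map_eq_gaussianReal {Ω : Type*} [MeasurableSpace Ω]
    {P : Measure Ω} {Y : Ω → ℝ} (hY : Measurable Y) {v : ℝ≥0} (hYlaw : P.map Y = gaussianReal 0 v)
    (hv : v ≠ 0) {c : ℝ} (hc : 2 * c * v < 1) :
    ∫⁻ ω, ENNReal.ofReal (exp (c * Y ω ^ 2)) ∂P
      = ENNReal.ofReal ((1 - 2 * c * v) ^ (-(1 / 2) : ℝ)) := by
  rw [← lintegral_map (f := fun x => ENNReal.ofReal (exp (c * x ^ 2))) (by fun_prop) hY, hYlaw,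
    lintegral_ofReal_exp_mul_sq_gaussianReal hv hc]

lemma Real.multipliable_one_sub_rpow {ι : Type*} {x : ι → ℝ} (hx : Summable x)
    (hx_lt : ∀ i, x i < 1) (p : ℝ) : Multipliable fun i => (1 - x i) ^ p := by
  refine multipliable_of_summable_log (fun i => rpow_pos_of_pos (sub_pos.2 (hx_lt i)) p) ?_
  simp_rw [log_rpow (sub_pos.2 (hx_lt _)), sub_eq_add_neg]
  exact (summable_log_one_add_of_summable hx.neg).mul_left p

lemma ENNReal.tendsto_prod_range_ofReal {f : ℕ → ℝ} {a : ℝ} (hf : HasProd f a)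
    (hf_nonneg : ∀ i, 0 ≤ f i) :
    Tendsto (fun n => ∏ i ∈ range n, ENNReal.ofReal (f i)) atTop (𝓝 (ENNReal.ofReal a)) := by
  simp_rw [← ENNReal.ofReal_prod_of_nonneg fun i _ => hf_nonneg i]
  exact (ENNReal.continuous_ofReal.tendsto a).comp hf.tendsto_prod_nat

lemma measure_lt_tsum_le_exp_neg_mul {Ω : Type*} [MeasurableSpace Ω] {P : Measure Ω}
    {X : ℕ → Ω → ℝ} (hX : ∀ i, Measurable (X i)) (hindep : iIndepFun X P) {θ : ℝ} (hθ : 0 ≤ θ)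
    {M : ℝ≥0∞} (hM : Tendsto (fun n => ∏ i ∈ range n, ∫⁻ ω, ENNReal.ofReal (exp (θ * X i ω)) ∂P)
      atTop (𝓝 M)) (c : ℝ) :
    P {ω | Summable (fun i => X i ω) ∧ c < ∑' i, X i ω}
      ≤ ENNReal.ofReal (exp (-(θ * c))) * M := by
  set Y : ℕ → Ω → ℝ≥0∞ := fun i ω => ENNReal.ofReal (exp (θ * X i ω))
  have hY : ∀ i, Measurable (Y i) := fun i => by fun_prop
  have hprod_meas : ∀ n, Measurable fun ω => ∏ i ∈ range n, Y i ω := fun n => by fun_prop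
  set f : Ω → ℝ≥0∞ :=
    fun ω => ENNReal.ofReal (exp (-(θ * c))) * liminf (fun n => ∏ i ∈ range n, Y i ω) atTop
  have hevent : {ω | Summable (fun i => X i ω) ∧ c < ∑' i, X i ω} ⊆ {ω | 1 ≤ f ω} := by
    rintro ω ⟨hsum, hc⟩
    have hlim : Tendsto (fun n => ∏ i ∈ range n, Y i ω) atTop
        (𝓝 (ENNReal.ofReal (exp (∑' i, θ * X i ω)))) :=
      ENNReal.tendsto_prod_range_ofReal (hsum.mul_left θ).hasSum.rexp fun i => (exp_pos _).le
    show 1 ≤ ENNReal.ofReal (exp (-(θ * c))) * liminf (fun n => ∏ i ∈ range n, Y i ω) atTop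
    rw [hlim.liminf_eq, ← ENNReal.ofReal_mul (exp_pos _).le, ← exp_add, ENNReal.one_le_ofReal,
      one_le_exp_iff, tsum_mul_left]
    linarith [mul_le_mul_of_nonneg_left hc.le hθ]
  calc P {ω | Summable (fun i => X i ω) ∧ c < ∑' i, X i ω}
      ≤ P {ω | 1 ≤ f ω} := measure_mono hevent
    _ ≤ ∫⁻ ω, f ω ∂P := by
        simpa only [one_mul] using mul_meas_ge_le_lintegral₀ (by fun_prop) 1
    _ ≤ ENNReal.ofReal (exp (-(θ * c)))
          * liminf (fun n => ∫⁻ ω, ∏ i ∈ range n, Y i ω ∂P) atTop := by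
        rw [lintegral_const_mul _ (Measurable.liminf hprod_meas)]
        exact mul_le_mul_right (lintegral_liminf_le hprod_meas) _
    _ = ENNReal.ofReal (exp (-(θ * c))) * M := by
        have hYindep : iIndepFun Y P :=
          hindep.comp (fun _ x => ENNReal.ofReal (exp (θ * x))) fun _ => by fun_prop
        simp_rw [lintegral_prod_eq_prod_lintegral_of_indepFun _ Y hYindep hY]
        rw [hM.liminf_eq]

lemma sum_range_mul_sq_le_of_mul_sum_sq_lt {lam x : ℕ → ℝ} {k : ℕ} {c μ a : ℝ} (hc : 0 ≤ c)
    (hμ : 0 < μ) (hlam : ∀ i < k, lam i = c) (h : μ * ∑ i ∈ range k, x i ^ 2 < a) :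
    ∑ i ∈ range k, lam i * x i ^ 2 ≤ c * (a / μ) := by
  calc ∑ i ∈ range k, lam i * x i ^ 2 = c * ∑ i ∈ range k, x i ^ 2 := by
        rw [mul_sum]
        exact sum_congr rfl fun i hi => by rw [hlam i (mem_range.1 hi)]
    _ ≤ c * (a / μ) := mul_le_mul_of_nonneg_left (by rw [le_div_iff₀ hμ]; linarith) hc

lemma summable_nat_add_and_sub_lt_tsum {s : ℕ → ℝ} {k : ℕ} {u B : ℝ} (hu₀ : 0 ≤ u)
    (hu : u < ∑' i, s i) (hB : ∑ i ∈ range k, s i ≤ B) :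
    Summable (fun i => s (i + k)) ∧ u - B < ∑' i, s (i + k) := by
  have hs : Summable s := by
    by_contra h
    rw [tsum_eq_zero_of_not_summable h] at hu
    linarith
  rw [← hs.sum_add_tsum_nat_add k] at hu
  exact ⟨(summable_nat_add_iff k).2 hs, by linarith⟩

lemma one_div_add_one_div_mul_div_two_lt_one {l l' y : ℝ} (hl' : 0 < l') (hlt : l' < l)
    (hy : y ≤ l') : (1 / l + 1 / l') * y / 2 < 1 := by
  have hl : 0 < l := hl'.trans hlt
  have hy' : (1 / l + 1 / l') * y ≤ (1 / l + 1 / l') * l' :=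
    mul_le_mul_of_nonneg_left hy (by positivity)
  have hl'_eq : (1 / l + 1 / l') * l' = l' / l + 1 := by field_simp
  linarith [(div_lt_one hl).2 hlt]

theorem stmt_11_general
    {Ω : Type*} [MeasurableSpace Ω] (P : Measure Ω)
    (t : ℕ → Ω → ℝ) (htmeas : ∀ i, Measurable (t i))
    (htlaw : ∀ i, P.map (t i) = gaussianReal 0 1)
    (htindep : iIndepFun t P)
    (g : ℕ)
    (G : Matrix (Fin g) (Fin g) ℝ)
    (μt : ℝ) (hμt : 0 < μt)
    (hμmin : ∀ x : Fin g → ℝ,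
      μt * ∑ i, x i ^ 2 ≤ ∑ i, ∑ j, G i j * x i * x j)
    (lam : ℕ → ℝ) (hlamsum : Summable fun i => |lam i|)
    (lamp lam' : ℝ) (hlam'pos : 0 < lam') (hlt : lam' < lamp)
    (hfirst : ∀ i < g, lam i = lamp)
    (hrest : ∀ i, g ≤ i → lam i ≤ lam') :
    Multipliable (fun i : ℕ =>
      (1 - (1 / lamp + 1 / lam') * lam (i + g) / 2) ^ (-(1 / 2) : ℝ)) ∧
    ∀ a > (0 : ℝ), ∀ u > (0 : ℝ),
      P {ω | (∑ i : Fin g, ∑ j : Fin g, G i j * t i.1 ω * t j.1 ω) < a ∧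
              u < ∑' i, lam i * t i ω ^ 2}
        ≤ ENNReal.ofReal
            ((Real.exp ((1 + lamp / lam') * a / (4 * μt)) *
              ∏' i : ℕ, (1 - (1 / lamp + 1 / lam') * lam (i + g) / 2) ^ (-(1 / 2) : ℝ)) *
             Real.exp (-(1 / lamp + 1 / lam') * u / 4)) := by
  have hlamp : 0 < lamp := hlam'pos.trans hlt
  have hx_lt : ∀ i, (1 / lamp + 1 / lam') * lam (i + g) / 2 < 1 := fun i =>
    one_div_add_one_div_mul_div_two_lt_one hlam'pos hlt (hrest (i + g) (Nat.le_add_left g i))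
  have hmult := Real.multipliable_one_sub_rpow
    ((((summable_nat_add_iff g).2 hlamsum.of_abs).mul_left (1 / lamp + 1 / lam')).div_const 2)
    hx_lt (-(1 / 2))
  refine ⟨hmult, fun a _ u hu => ?_⟩
  set θ : ℝ := (1 / lamp + 1 / lam') / 4 with hθ
  have hmoment : ∀ i, ∫⁻ ω, ENNReal.ofReal (exp (θ * (lam (i + g) * t (i + g) ω ^ 2))) ∂P
      = ENNReal.ofReal ((1 - (1 / lamp + 1 / lam') * lam (i + g) / 2) ^ (-(1 / 2) : ℝ)) := by
    intro i
    simp_rw [← mul_assoc]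
    rw [lintegral_ofReal_exp_mul_sq_of_map_eq_gaussianReal (htmeas _) (htlaw _) one_ne_zero
      (by rw [hθ]; push_cast; linarith [hx_lt i])]
    congr 3
    push_cast
    ring
  have htail_indep : iIndepFun (fun i ω => lam (i + g) * t (i + g) ω ^ 2) P :=
    (htindep.precomp (add_left_injective g)).comp (fun i x => lam (i + g) * x ^ 2)
      fun i => by fun_prop
  have htail_moments : Tendsto (fun n => ∏ i ∈ range n,
      ∫⁻ ω, ENNReal.ofReal (exp (θ * (lam (i + g) * t (i + g) ω ^ 2))) ∂P) atTop
      (𝓝 (ENNReal.ofReal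
        (∏' i : ℕ, (1 - (1 / lamp + 1 / lam') * lam (i + g) / 2) ^ (-(1 / 2) : ℝ)))) := by
    simp_rw [hmoment]
    exact ENNReal.tendsto_prod_range_ofReal hmult.hasProd
      fun i => rpow_nonneg (sub_pos.2 (hx_lt i)).le _
  refine (measure_mono ?_).trans ((measure_lt_tsum_le_exp_neg_mul (fun i => by fun_prop)
    htail_indep (by positivity) htail_moments (u - lamp * (a / μt))).trans_eq ?_)
  · rintro ω ⟨hQ, hu'⟩
    have hμQ := (hμmin fun i => t i ω).trans_lt hQ
    rw [Fin.sum_univ_eq_sum_range (fun i => t i ω ^ 2)] at hμQ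
    exact summable_nat_add_and_sub_lt_tsum (s := fun i => lam i * t i ω ^ 2) hu.le hu'
      (sum_range_mul_sq_le_of_mul_sum_sq_lt hlamp.le hμt hfirst hμQ)
  · have hexponent : -(θ * (u - lamp * (a / μt)))
        = (1 + lamp / lam') * a / (4 * μt) + -(1 / lamp + 1 / lam') * u / 4 := by
      rw [hθ]
      field_simp
      ring
    rw [← ENNReal.ofReal_mul (exp_pos _).le, hexponent, exp_add]
    congr 1
    ring

/-- Let `(t i)_{i ∈ ℕ}` be i.i.d. standard real Gaussian random variables, `g ≥ 1`, `G` a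
real symmetric positive-definite `g×g` matrix with smallest eigenvalue `μ̃ > 0` (so that
`μ̃ Σ x_i² ≤ Σ_{ij} G_{ij} x_i x_j`), and `(λ i)` absolutely summable reals whose first `g`
values equal `λ⁺ > 0` and whose remaining values are `≤ λ′`, where `0 < λ′ < λ⁺`.
Then the infinite product `Π_{i > g} (1 − (1/λ⁺ + 1/λ′) λ_i / 2)^(−1/2)` converges, and
for every `a > 0` and `u > 0`,
`P(Σ_{i,j<g} G_{ij} t_i t_j < a ∧ Σ_i λ_i t_i² > u) ≤ C₂(a) exp(−(1/λ⁺ + 1/λ′) u/4)`,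
where `C₂(a) = exp((1 + λ⁺/λ′) a/(4μ̃)) Π_{i > g} (1 − (1/λ⁺ + 1/λ′) λ_i / 2)^(−1/2)`. -/
theorem stmt_11
    {Ω : Type*} [MeasurableSpace Ω] (P : Measure Ω) [IsProbabilityMeasure P]
    (t : ℕ → Ω → ℝ) (htmeas : ∀ i, Measurable (t i))
    (htlaw : ∀ i, P.map (t i) = gaussianReal 0 1)
    (htindep : iIndepFun t P)
    (g : ℕ) (hg : 1 ≤ g)
    (G : Matrix (Fin g) (Fin g) ℝ) (hGsym : G.IsSymm) (hGpd : G.PosDef)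
    (μt : ℝ) (hμt : 0 < μt)
    (hμmin : ∀ x : Fin g → ℝ,
      μt * ∑ i, x i ^ 2 ≤ ∑ i, ∑ j, G i j * x i * x j)
    (lam : ℕ → ℝ) (hlamsum : Summable fun i => |lam i|)
    (lamp lam' : ℝ) (hlam'pos : 0 < lam') (hlt : lam' < lamp)
    (hfirst : ∀ i < g, lam i = lamp)
    (hrest : ∀ i, g ≤ i → lam i ≤ lam') :
    Multipliable (fun i : ℕ =>
      (1 - (1 / lamp + 1 / lam') * lam (i + g) / 2) ^ (-(1 / 2) : ℝ)) ∧
    ∀ a > (0 : ℝ), ∀ u > (0 : ℝ),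
      P {ω | (∑ i : Fin g, ∑ j : Fin g, G i j * t i.1 ω * t j.1 ω) < a ∧
              u < ∑' i, lam i * t i ω ^ 2}
        ≤ ENNReal.ofReal
            ((Real.exp ((1 + lamp / lam') * a / (4 * μt)) *
              ∏' i : ℕ, (1 - (1 / lamp + 1 / lam') * lam (i + g) / 2) ^ (-(1 / 2) : ℝ)) *
             Real.exp (-(1 / lamp + 1 / lam') * u / 4)) :=
  stmt_11_general P t htmeas htlaw htindep g G μt hμt hμmin lam hlamsum lamp lam' hlam'pos hlt
    hfirst hrest
end

section
/- One has Σ_{μ=1}^3 C_{μμ}(0) = 2E, and for each ν ∈ {1,2,3} the second partial derivative ∂²/∂z_ν² [ Σ_{μ=1}^3 C_{μμ}(z) ] evaluated at z = 0 equals −10E/(3ℓ²). -/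
/-- Let `E > 0`, `ℓ > 0`, `f : ℝ → ℝ` even, `C³`, with `f(0) = 1` and `f''(0) = −1/ℓ²`, and
let `C` be the matrix field `C_{μν}(x) = (2E/3) f(|x|) δ_{μν} + (E/3)|x| f'(|x|)(δ_{μν} −
x_μ x_ν/|x|²)` for `x ≠ 0`, `C_{μν}(0) = (2E/3) δ_{μν}`. Then `Σ_μ C_{μμ}(0) = 2E`, and
for each `ν` the second partial derivative `∂²/∂z_ν² [Σ_μ C_{μμ}(z)]` at `z = 0` equals
`−10E/(3ℓ²)`. -/
theorem stmt_16 (E l : ℝ) (hE : 0 < E) (hl : 0 < l)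
    (f : ℝ → ℝ) (hf : ContDiff ℝ 3 f) (hfeven : ∀ s, f (-s) = f s)
    (hf0 : f 0 = 1) (hf'' : deriv (deriv f) 0 = -1 / l ^ 2)
    (C : EuclideanSpace ℝ (Fin 3) → Matrix (Fin 3) (Fin 3) ℝ)
    (hC0 : ∀ μ ν : Fin 3, C 0 μ ν = 2 * E / 3 * (if μ = ν then 1 else 0))
    (hCx : ∀ x : EuclideanSpace ℝ (Fin 3), x ≠ 0 → ∀ μ ν : Fin 3,
      C x μ ν = 2 * E / 3 * f ‖x‖ * (if μ = ν then 1 else 0)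
        + E / 3 * ‖x‖ * deriv f ‖x‖ * ((if μ = ν then 1 else 0) - x μ * x ν / ‖x‖ ^ 2)) :
    (∑ μ : Fin 3, C 0 μ μ) = 2 * E ∧
    ∀ ν : Fin 3,
      deriv (deriv (fun s : ℝ => ∑ μ : Fin 3, C (s • EuclideanSpace.single ν (1 : ℝ)) μ μ)) 0
        = -10 * E / (3 * l ^ 2) := by
  -- basic differentiability facts
  have hf1 : ContDiff ℝ 2 (deriv f) :=
    (contDiff_succ_iff_deriv.mp (show ContDiff ℝ (2+1) f from hf)).2.2
  have hf2 : ContDiff ℝ 1 (deriv (deriv f)) :=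
    (contDiff_succ_iff_deriv.mp (show ContDiff ℝ (1+1) (deriv f) from hf1)).2.2
  have hdf : Differentiable ℝ f := hf.differentiable (by norm_num)
  have hdf1 : Differentiable ℝ (deriv f) := hf1.differentiable (by norm_num)
  have hdf2 : Differentiable ℝ (deriv (deriv f)) := hf2.differentiable (by norm_num)
  -- derivative of even function is odd
  have hodd : ∀ s : ℝ, deriv f (-s) = - deriv f s := by
    intro s
    have h1 : deriv (fun t : ℝ => f (-t)) s = - deriv f (-s) := deriv_comp_neg f s
    have h2 : (fun t : ℝ => f (-t)) = f := funext hfeven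
    rw [h2] at h1
    linarith
  have hfabs : ∀ s : ℝ, f |s| = f s := by
    intro s
    rcases abs_choice s with h | h
    · rw [h]
    · rw [h, hfeven]
  have hf'abs : ∀ s : ℝ, |s| * deriv f |s| = s * deriv f s := by
    intro s
    rcases abs_choice s with h | h
    · rw [h]
    · rw [h, hodd]; ring
  have htrace0 : (∑ μ : Fin 3, C 0 μ μ) = 2 * E := by
    simp [hC0, Fin.sum_univ_three]; ring
  refine ⟨htrace0, fun ν => ?_⟩
  -- the trace along the line equals a smooth function g
  have hsum : (fun s : ℝ => ∑ μ : Fin 3, C (s • EuclideanSpace.single ν (1 : ℝ)) μ μ)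
      = fun s : ℝ => 2 * E * f s + 2 * E / 3 * (s * deriv f s) := by
    funext s
    rcases eq_or_ne s 0 with rfl | hs
    · simp only [zero_smul, zero_mul, mul_zero, add_zero]
      rw [htrace0, hf0]; ring
    · set x : EuclideanSpace ℝ (Fin 3) := s • EuclideanSpace.single ν (1 : ℝ) with hx
      have hxν : x ν = s := by
        simp [hx, EuclideanSpace.single_apply]
      have hxne : x ≠ 0 := by
        intro h
        apply hs
        rw [← hxν, h]; rfl
      have hnorm : ‖x‖ = |s| := by
        rw [hx, norm_smul, EuclideanSpace.norm_single]
        simp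
      have hxμ : ∀ μ : Fin 3, x μ = if μ = ν then s else 0 := by
        intro μ
        simp [hx, EuclideanSpace.single_apply]
      have hs2 : |s| ^ 2 = s ^ 2 := sq_abs s
      rw [Fin.sum_univ_three]
      rw [hCx x hxne, hCx x hxne, hCx x hxne, hnorm, hfabs, hs2]
      have key : ∀ μ : Fin 3, x μ * x μ = if μ = ν then s ^ 2 else 0 := by
        intro μ; rw [hxμ μ]; split <;> ring
      rw [key, key, key]
      have hss : s ^ 2 ≠ 0 := pow_ne_zero 2 hs
      have hmul : E / 3 * |s| * deriv f |s| = E / 3 * (s * deriv f s) := by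
        rw [mul_assoc, hf'abs s]
      rw [hmul]
      have hd : s ^ 2 / s ^ 2 = 1 := div_self hss
      fin_cases ν <;> norm_num [hd, Fin.ext_iff] <;> ring
  rw [hsum]
  have hg1 : deriv (fun s : ℝ => 2 * E * f s + 2 * E / 3 * (s * deriv f s))
      = fun s : ℝ => 2 * E * deriv f s + 2 * E / 3 * (deriv f s + s * deriv (deriv f) s) := by
    funext s
    have h1 : HasDerivAt f (deriv f s) s := (hdf s).hasDerivAt
    have h2 : HasDerivAt (deriv f) (deriv (deriv f) s) s := (hdf1 s).hasDerivAt
    have h3 : HasDerivAt (fun s : ℝ => 2 * E * f s + 2 * E / 3 * (s * deriv f s))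
        (2 * E * deriv f s + 2 * E / 3 * (1 * deriv f s + s * deriv (deriv f) s)) s :=
      (h1.const_mul (2 * E)).add (((hasDerivAt_id s).mul h2).const_mul (2 * E / 3))
    rw [h3.deriv]; ring
  rw [hg1]
  have h2 : HasDerivAt (deriv f) (deriv (deriv f) 0) 0 := (hdf1 0).hasDerivAt
  have h3 : HasDerivAt (deriv (deriv f)) (deriv (deriv (deriv f)) 0) 0 := (hdf2 0).hasDerivAt
  have h4 : HasDerivAt (fun s : ℝ => 2 * E * deriv f s
        + 2 * E / 3 * (deriv f s + s * deriv (deriv f) s))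
      (2 * E * deriv (deriv f) 0 + 2 * E / 3 * (deriv (deriv f) 0
        + (1 * deriv (deriv f) 0 + 0 * deriv (deriv (deriv f)) 0))) 0 :=
    (h2.const_mul (2 * E)).add
      ((h2.add ((hasDerivAt_id 0).mul h3)).const_mul (2 * E / 3))
  rw [h4.deriv, hf'']
  field_simp
  ring
end

section
/- Let r > 0, λ ∈ ℝ with λ ≠ 0, and let v : B_r(0) → ℝ³ be differentiable, not identically zero, and satisfy for every x ∈ B_r(0) and every μ ∈ {1,2,3}: 2λ v_μ(x) = c_μ(x) · (curl v)(0) − v(0) · (curl c_μ)(x). Then λ = √5 E/(3ℓ) or λ = −√5 E/(3ℓ), and (curl v)(0) = (3λ/E) v(0), i.e. (curl v)(0) = ±(√5/ℓ) v(0) according to the sign of λ. -/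
/-!
Write `C(x) = A(|x|) I - (E/3) k(|x|) x xᵀ` with `A(s) = 2E/3 f(s) + E/3 s f'(s)` and
`k(s) = f'(s)/s`, extended continuously by `k(0) = f''(0)`. Evenness gives `f'(0) = 0`, so `C` has
zero derivative at `0` and second derivatives
`∂_τ ∂_σ C_{μν}(0) = (E f''(0)/3) (4 δ_{μν} δ_{στ} - δ_{μσ} δ_{ντ} - δ_{νσ} δ_{μτ})`.
Evaluating the equation at `0` gives `2λ v(0) = (2E/3) ω` with `ω = (curl v)(0)`. Taking its curl
at `0`, only the term `v(0)·(curl c_μ)(x)` contributes, and the contraction of the second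
derivatives gives `2λ ω = (10E/(3ℓ²)) v(0)`. If `v(0) = 0` then `ω = 0` and the equation forces
`v = 0` on the ball; so `v(0) ≠ 0`, and eliminating `ω` gives `λ² = 5E²/(9ℓ²)`.
-/

/-- The partial derivative `∂ w_i / ∂ x_j` of a vector field `w` on `ℝ³`. -/
noncomputable def pderiv3 (w : EuclideanSpace ℝ (Fin 3) → EuclideanSpace ℝ (Fin 3))
    (j i : Fin 3) (x : EuclideanSpace ℝ (Fin 3)) : ℝ :=
  fderiv ℝ (fun y => w y i) x (EuclideanSpace.single j (1 : ℝ))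

/-- The usual curl of a vector field on `ℝ³`. -/
noncomputable def curl3 (w : EuclideanSpace ℝ (Fin 3) → EuclideanSpace ℝ (Fin 3))
    (x : EuclideanSpace ℝ (Fin 3)) : EuclideanSpace ℝ (Fin 3) :=
  (WithLp.equiv 2 (Fin 3 → ℝ)).symm
    ![pderiv3 w 1 2 x - pderiv3 w 2 1 x,
      pderiv3 w 2 0 x - pderiv3 w 0 2 x,
      pderiv3 w 0 1 x - pderiv3 w 1 0 x]

/-- For a matrix field `C`, the vector field `c_μ` with components `(c_μ(x))_ν = C_{μν}(x)`. -/
noncomputable def cvec (C : EuclideanSpace ℝ (Fin 3) → Matrix (Fin 3) (Fin 3) ℝ)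
    (μ : Fin 3) (x : EuclideanSpace ℝ (Fin 3)) : EuclideanSpace ℝ (Fin 3) :=
  (WithLp.equiv 2 (Fin 3 → ℝ)).symm (fun ν => C x μ ν)

open Filter Asymptotics Topology

section Calculus

variable {F : Type*} [NormedAddCommGroup F] [NormedSpace ℝ F] {h g : F → ℝ} {g' : F →L[ℝ] ℝ}
  {x : F}

theorem hasFDerivAt_mul_zero_of_isBigO (hh : ContinuousAt h x) (hhx : h x = 0)
    (hg : g =O[𝓝 x] (· - x)) : HasFDerivAt (fun y => h y * g y) (0 : F →L[ℝ] ℝ) x := by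
  have hh' : h =o[𝓝 x] (fun _ => (1 : ℝ)) := by
    rw [isLittleO_one_iff]; simpa [hhx] using hh.tendsto
  have hgx : g x = 0 :=
    (hg.norm_right.congr_right fun y => (pow_one _).symm).eq_zero_of_norm_pow one_ne_zero
  rw [hasFDerivAt_iff_isLittleO]
  simpa [hhx, hgx] using (hh'.mul_isBigO hg.norm_right).trans_isBigO (isBigO_refl _ _)

theorem HasFDerivAt.continuousAt_mul (hh : ContinuousAt h x) (hg : HasFDerivAt g g' x)
    (hgx : g x = 0) : HasFDerivAt (fun y => h y * g y) (h x • g') x := by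
  have hsub : ContinuousAt (fun y => h y - h x) x := hh.sub continuousAt_const
  have := (hasFDerivAt_mul_zero_of_isBigO hsub (sub_self _)
    (by simpa [hgx] using hg.isBigO_sub)).add (hg.const_mul (h x))
  rw [zero_add] at this
  refine this.congr_of_eventuallyEq (.of_forall fun y => ?_)
  simp only [Pi.add_apply]
  ring

theorem hasFDerivAt_comp_norm_zero {φ : ℝ → ℝ} (hφ : HasDerivAt φ 0 0) :
    HasFDerivAt (fun y : F => φ ‖y‖) (0 : F →L[ℝ] ℝ) 0 := by
  rw [hasDerivAt_iff_isLittleO_nhds_zero] at hφ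
  rw [hasFDerivAt_iff_isLittleO_nhds_zero]
  simp only [zero_add, norm_zero, smul_zero, sub_zero, zero_apply] at hφ ⊢
  exact isLittleO_norm_right.mp (hφ.comp_tendsto tendsto_norm_zero)

end Calculus

theorem hasFDerivAt_norm_of_ne_zero {F : Type*} [NormedAddCommGroup F] [InnerProductSpace ℝ F]
    {x : F} (hx : x ≠ 0) : HasFDerivAt (‖·‖) (‖x‖⁻¹ • innerSL ℝ x) x := by
  have := (hasStrictFDerivAt_norm_sq x).hasFDerivAt.sqrt (by positivity)
  simp only [Real.sqrt_sq (norm_nonneg _)] at this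
  convert this using 1
  ext y
  simp only [smul_apply, coe_innerSL_apply, smul_eq_mul, one_div, mul_inv_rev, nsmul_eq_mul,
    Nat.cast_ofNat]
  field_simp

section OneVariable

variable {f : ℝ → ℝ}

theorem deriv_zero_of_even (hf : ∀ s, f (-s) = f s) : deriv f 0 = 0 := by
  have h := deriv_comp_neg (f := f) (x := 0)
  simp only [hf, neg_zero] at h
  linarith

theorem dslope_deriv_of_ne (hf0 : deriv f 0 = 0) {s : ℝ} (hs : s ≠ 0) :
    dslope (deriv f) 0 s = deriv f s / s := by
  rw [dslope_of_ne _ hs, slope_def_field, hf0, sub_zero, sub_zero]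

theorem ContDiff.differentiable_deriv_of_two (hf : ContDiff ℝ 2 f) : Differentiable ℝ (deriv f) :=
  (hf.iterate_deriv' 1 1).differentiable one_ne_zero

theorem ContDiff.continuous_deriv_deriv_of_two (hf : ContDiff ℝ 2 f) :
    Continuous (deriv (deriv f)) :=
  (hf.iterate_deriv' 0 2).continuous

theorem hasDerivAt_dslope_deriv (hf : ContDiff ℝ 2 f) (hf0 : deriv f 0 = 0) {s : ℝ} (hs : s ≠ 0) :
    HasDerivAt (dslope (deriv f) 0) ((deriv (deriv f) s - dslope (deriv f) 0 s) / s) s := by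
  have h := (hf.differentiable_deriv_of_two s).hasDerivAt.div (hasDerivAt_id s) hs
  refine (h.congr_of_eventuallyEq ?_).congr_deriv ?_
  · filter_upwards [isOpen_ne.mem_nhds hs] with t ht using dslope_deriv_of_ne hf0 ht
  · rw [dslope_deriv_of_ne hf0 hs]; simp only [id, mul_one]; field_simp

theorem continuousAt_dslope_deriv_norm {F : Type*} [SeminormedAddCommGroup F]
    (hf : ContDiff ℝ 2 f) : ContinuousAt (fun y : F => dslope (deriv f) 0 ‖y‖) 0 :=
  (continuousAt_dslope_same.2 (hf.differentiable_deriv_of_two 0)).comp_of_eq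
    continuous_norm.continuousAt norm_zero

end OneVariable

section Covariance

variable {ι : Type*} [Fintype ι]

theorem hasFDerivAt_coord_mul_coord (μ ν : ι) (x : EuclideanSpace ℝ ι) :
    HasFDerivAt (fun y : EuclideanSpace ℝ ι => y μ * y ν)
      (x μ • EuclideanSpace.proj (𝕜 := ℝ) ν + x ν • EuclideanSpace.proj (𝕜 := ℝ) μ) x :=
  have hμ : HasFDerivAt (fun y : EuclideanSpace ℝ ι => y μ) (EuclideanSpace.proj (𝕜 := ℝ) μ) x :=
    (EuclideanSpace.proj (𝕜 := ℝ) μ).hasFDerivAt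
  have hν : HasFDerivAt (fun y : EuclideanSpace ℝ ι => y ν) (EuclideanSpace.proj (𝕜 := ℝ) ν) x :=
    (EuclideanSpace.proj (𝕜 := ℝ) ν).hasFDerivAt
  hμ.mul hν

theorem isBigO_coord_mul_coord_mul_coord_div_norm_sq (σ μ ν : ι) :
    (fun x : EuclideanSpace ℝ ι => x σ * x μ * x ν / ‖x‖ ^ 2) =O[𝓝 0] (· - 0) := by
  refine IsBigO.of_bound 1 (.of_forall fun x => ?_)
  rcases eq_or_ne x 0 with rfl | hx
  · simp
  have hs : 0 < ‖x‖ := norm_pos_iff.2 hx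
  have hσ := PiLp.norm_apply_le x σ
  have hμ := PiLp.norm_apply_le x μ
  have hν := PiLp.norm_apply_le x ν
  rw [sub_zero, one_mul, norm_div, norm_mul, norm_mul, norm_pow, norm_norm,
    div_le_iff₀ (by positivity)]
  calc ‖x σ‖ * ‖x μ‖ * ‖x ν‖ ≤ ‖x‖ * ‖x‖ * ‖x‖ := by gcongr
    _ = ‖x‖ * ‖x‖ ^ 2 := by ring

variable [DecidableEq ι] (E : ℝ) (f : ℝ → ℝ)

noncomputable def diagCoeff (s : ℝ) : ℝ := 2 * E / 3 * f s + E / 3 * s * deriv f s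

/-- The matrix field of the theorem, `A(|x|) δ_{μν} - (E/3) k(|x|) x_μ x_ν` with `k(s) = f'(s)/s`
extended by `dslope` to its limit `f''(0)` at `s = 0`. -/
noncomputable def covariance (x : EuclideanSpace ℝ ι) : Matrix ι ι ℝ :=
  Matrix.of fun μ ν => diagCoeff E f ‖x‖ * (if μ = ν then 1 else 0)
    - E / 3 * dslope (deriv f) 0 ‖x‖ * (x μ * x ν)

/-- `∂_σ C_{μν}(x)`, arranged so that every coefficient is continuous at `0`; at `x = 0` it is `0`
through the convention `0 / 0 = 0`. -/
noncomputable def covariancePartial (σ μ ν : ι) (x : EuclideanSpace ℝ ι) : ℝ :=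
  (E * dslope (deriv f) 0 ‖x‖ + E / 3 * deriv (deriv f) ‖x‖) * (x σ * (if μ = ν then 1 else 0))
    - E / 3 * ((deriv (deriv f) ‖x‖ - dslope (deriv f) 0 ‖x‖) * (x σ * x μ * x ν / ‖x‖ ^ 2)
      + dslope (deriv f) 0 ‖x‖ * ((if μ = σ then 1 else 0) * x ν + x μ * (if ν = σ then 1 else 0)))

variable {E f}

theorem hasDerivAt_diagCoeff (hf : ContDiff ℝ 2 f) (s : ℝ) :
    HasDerivAt (diagCoeff E f) (E * deriv f s + E / 3 * s * deriv (deriv f) s) s := by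
  have hf1 := (hf.differentiable two_ne_zero s).hasDerivAt
  have hf2 := (hf.differentiable_deriv_of_two s).hasDerivAt
  have h := (hf1.const_mul (2 * E / 3)).add (((hasDerivAt_id s).mul hf2).const_mul (E / 3))
  refine (h.congr_deriv (by simp only [id]; ring)).congr_of_eventuallyEq (.of_forall fun t => ?_)
  simp only [diagCoeff, Pi.add_apply, Pi.mul_apply, id]
  ring

theorem hasFDerivAt_covariance_zero (hf : ContDiff ℝ 2 f) (hf0 : deriv f 0 = 0) (μ ν : ι) :
    HasFDerivAt (fun x : EuclideanSpace ℝ ι => covariance E f x μ ν)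
      (0 : EuclideanSpace ℝ ι →L[ℝ] ℝ) 0 := by
  have hdiag : HasDerivAt (diagCoeff E f) 0 0 := by
    simpa [hf0] using hasDerivAt_diagCoeff (E := E) hf 0
  have hquad := ((hasFDerivAt_coord_mul_coord μ ν 0).continuousAt_mul
    (continuousAt_dslope_deriv_norm (F := EuclideanSpace ℝ ι) hf) (by simp)).const_mul (E / 3)
  have h := ((hasFDerivAt_comp_norm_zero (F := EuclideanSpace ℝ ι) hdiag).mul_const
    (if μ = ν then (1 : ℝ) else 0)).sub hquad
  refine (h.congr_fderiv (by simp)).congr_of_eventuallyEq (.of_forall fun x => ?_)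
  simp only [covariance, Matrix.of_apply, Pi.sub_apply]
  ring

theorem fderiv_covariance_single (hf : ContDiff ℝ 2 f) (hf0 : deriv f 0 = 0) (σ μ ν : ι)
    (x : EuclideanSpace ℝ ι) :
    fderiv ℝ (fun y => covariance E f y μ ν) x (EuclideanSpace.single σ 1)
      = covariancePartial E f σ μ ν x := by
  rcases eq_or_ne x 0 with rfl | hx
  · simp [(hasFDerivAt_covariance_zero hf hf0 μ ν).fderiv, covariancePartial]
  have hs : ‖x‖ ≠ 0 := norm_ne_zero_iff.2 hx
  have hnorm := hasFDerivAt_norm_of_ne_zero hx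
  have hdiag := (hasDerivAt_diagCoeff (E := E) hf ‖x‖).comp_hasFDerivAt x hnorm
  have hk := (hasDerivAt_dslope_deriv hf hf0 hs).comp_hasFDerivAt x hnorm
  have h := (hdiag.mul_const (if μ = ν then (1 : ℝ) else 0)).sub
    ((hk.mul (hasFDerivAt_coord_mul_coord μ ν x)).const_mul (E / 3))
  rw [(h.congr_of_eventuallyEq (.of_forall fun y => ?_)).fderiv]
  · simp only [sub_apply, add_apply, smul_apply, innerSL_apply_apply,
      EuclideanSpace.inner_single_right, PiLp.proj_apply, PiLp.single_apply, conj_trivial, smul_eq_mul, Function.comp_apply,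
      covariancePartial, dslope_deriv_of_ne hf0 hs]
    field_simp
    ring
  · simp only [covariance, Matrix.of_apply, Function.comp_apply, Pi.sub_apply, Pi.mul_apply]
    ring

theorem hasFDerivAt_covariancePartial_zero (hf : ContDiff ℝ 2 f) (σ μ ν : ι) :
    HasFDerivAt (covariancePartial E f σ μ ν)
      ((E * deriv (deriv f) 0 / 3) •
        ((4 * if μ = ν then (1 : ℝ) else 0) • EuclideanSpace.proj (𝕜 := ℝ) σ
          - (if μ = σ then (1 : ℝ) else 0) • EuclideanSpace.proj (𝕜 := ℝ) ν
          - (if ν = σ then (1 : ℝ) else 0) • EuclideanSpace.proj (𝕜 := ℝ) μ)) 0 := by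
  have hk := continuousAt_dslope_deriv_norm (F := EuclideanSpace ℝ ι) hf
  have hf'' : ContinuousAt (fun x : EuclideanSpace ℝ ι => deriv (deriv f) ‖x‖) 0 :=
    hf.continuous_deriv_deriv_of_two.continuousAt.comp_of_eq continuous_norm.continuousAt norm_zero
  have hσ : HasFDerivAt (fun x : EuclideanSpace ℝ ι => x σ * (if μ = ν then 1 else 0))
      ((if μ = ν then (1 : ℝ) else 0) • EuclideanSpace.proj (𝕜 := ℝ) σ) 0 :=
    (EuclideanSpace.proj (𝕜 := ℝ) σ).hasFDerivAt.mul_const _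
  have hlin : HasFDerivAt (fun x : EuclideanSpace ℝ ι =>
        (if μ = σ then 1 else 0) * x ν + x μ * (if ν = σ then 1 else 0))
      ((if μ = σ then (1 : ℝ) else 0) • EuclideanSpace.proj (𝕜 := ℝ) ν
        + (if ν = σ then (1 : ℝ) else 0) • EuclideanSpace.proj (𝕜 := ℝ) μ) 0 :=
    ((EuclideanSpace.proj (𝕜 := ℝ) ν).hasFDerivAt.const_mul _).add
      ((EuclideanSpace.proj (𝕜 := ℝ) μ).hasFDerivAt.mul_const _)
  have h := (hσ.continuousAt_mul ((hk.const_mul E).add (hf''.const_mul (E / 3))) (by simp)).sub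
    (((hasFDerivAt_mul_zero_of_isBigO (hf''.sub hk) (by simp [dslope_same])
      (isBigO_coord_mul_coord_mul_coord_div_norm_sq σ μ ν)).add
      (hlin.continuousAt_mul hk (by simp))).const_mul (E / 3))
  refine h.congr_fderiv ?_
  ext y
  simp only [sub_apply, add_apply, smul_apply, Pi.add_apply, smul_eq_mul, norm_zero,
    dslope_same, zero_add]
  ring

end Covariance

local notation "ℝ³" => EuclideanSpace ℝ (Fin 3)

theorem curl3_apply (w : ℝ³ → ℝ³) (x : ℝ³) (i : Fin 3) :
    curl3 w x i = pderiv3 w (i + 1) (i + 2) x - pderiv3 w (i + 2) (i + 1) x := by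
  fin_cases i <;> rfl

theorem Filter.EventuallyEq.curl3_eq {w₁ w₂ : ℝ³ → ℝ³} {x : ℝ³} (h : w₁ =ᶠ[𝓝 x] w₂) :
    curl3 w₁ x = curl3 w₂ x := by
  have hp : ∀ j i, pderiv3 w₁ j i x = pderiv3 w₂ j i x := fun j i => by
    have hi : (fun y => w₁ y i) =ᶠ[𝓝 x] fun y => w₂ y i := h.mono fun y hy => congrArg (· i) hy
    rw [pderiv3, pderiv3, hi.fderiv_eq]
  simp only [curl3, hp]

theorem curl3_const_smul (c : ℝ) (w : ℝ³ → ℝ³) (x : ℝ³) :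
    curl3 (fun y => c • w y) x = c • curl3 w x := by
  have hp : ∀ j i, pderiv3 (fun y => c • w y) j i x = c * pderiv3 w j i x := fun j i => by
    have h := congrFun (fderiv_const_smul_field (𝕜 := ℝ) (f := fun y => w y i) c) x
    simp only [pderiv3, PiLp.smul_apply, smul_eq_mul]
    exact congrArg (· (EuclideanSpace.single j 1)) h
  ext i
  simp only [curl3_apply, hp, PiLp.smul_apply, smul_eq_mul]
  ring

/-- The right-hand side `c_μ(x)·(curl w)(0) - w(0)·(curl c_μ)(x)` of the equation. -/
noncomputable def curlOperator (C : ℝ³ → Matrix (Fin 3) (Fin 3) ℝ) (w : ℝ³ → ℝ³) (x : ℝ³) : ℝ³ :=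
  WithLp.toLp 2 fun μ => (∑ ν, C x μ ν * curl3 w 0 ν) - ∑ ν, w 0 ν * curl3 (cvec C μ) x ν

section CurlCovariance

variable {E : ℝ} {f : ℝ → ℝ}

theorem pderiv3_cvec_covariance (hf : ContDiff ℝ 2 f) (hf0 : deriv f 0 = 0) (μ σ ν : Fin 3)
    (x : ℝ³) : pderiv3 (cvec (covariance E f) μ) σ ν x = covariancePartial E f σ μ ν x :=
  fderiv_covariance_single hf hf0 σ μ ν x

theorem curlOperator_covariance_zero (hf : ContDiff ℝ 2 f) (hf0 : deriv f 0 = 0) (w : ℝ³ → ℝ³) :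
    curlOperator (covariance E f) w 0 = (2 * E / 3 * f 0) • curl3 w 0 := by
  ext μ
  have hcurl : ∀ ν, curl3 (cvec (covariance E f) μ) 0 ν = 0 := fun ν => by
    simp [curl3_apply, pderiv3_cvec_covariance hf hf0, covariancePartial]
  simp [curlOperator, hcurl, covariance, diagCoeff, Fin.sum_univ_three]

theorem curl3_curlOperator_covariance_zero (hf : ContDiff ℝ 2 f) (hf0 : deriv f 0 = 0)
    (w : ℝ³ → ℝ³) :
    curl3 (curlOperator (covariance E f) w) 0 = (-(10 / 3) * E * deriv (deriv f) 0) • w 0 := by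
  have hpartial := fun σ μ ν : Fin 3 => hasFDerivAt_covariancePartial_zero (E := E) hf σ μ ν
  have hD := fun μ : Fin 3 =>
    (HasFDerivAt.fun_sum (u := Finset.univ) fun (ν : Fin 3) _ =>
      (hasFDerivAt_covariance_zero (E := E) hf hf0 μ ν).mul_const (curl3 w 0 ν)).fun_sub
    (HasFDerivAt.fun_sum (u := Finset.univ) fun (ν : Fin 3) _ =>
      ((hpartial (ν + 1) μ (ν + 2)).fun_sub (hpartial (ν + 2) μ (ν + 1))).const_mul (w 0 ν))
  have hcomp : ∀ μ, (fun x => curlOperator (covariance E f) w x μ) = fun x =>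
      (∑ ν, covariance E f x μ ν * curl3 w 0 ν) - ∑ ν, w 0 ν *
        (covariancePartial E f (ν + 1) μ (ν + 2) x
          - covariancePartial E f (ν + 2) μ (ν + 1) x) := by
    intro μ; funext x; simp [curlOperator, curl3_apply, pderiv3_cvec_covariance hf hf0]
  ext α
  rw [curl3_apply, pderiv3, pderiv3, hcomp, hcomp, (hD _).fderiv, (hD _).fderiv]
  fin_cases α <;> simp [Fin.sum_univ_three] <;> ring

end CurlCovariance

theorem eq_covariance_of {ι : Type*} [Fintype ι] [DecidableEq ι] {E : ℝ} {f : ℝ → ℝ}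
    {C : EuclideanSpace ℝ ι → Matrix ι ι ℝ} (hf0 : f 0 = 1) (hf'0 : deriv f 0 = 0)
    (hC0 : ∀ μ ν : ι, C 0 μ ν = 2 * E / 3 * (if μ = ν then 1 else 0))
    (hCx : ∀ x : EuclideanSpace ℝ ι, x ≠ 0 → ∀ μ ν : ι,
      C x μ ν = 2 * E / 3 * f ‖x‖ * (if μ = ν then 1 else 0)
        + E / 3 * ‖x‖ * deriv f ‖x‖ * ((if μ = ν then 1 else 0) - x μ * x ν / ‖x‖ ^ 2)) :
    C = covariance E f := by
  funext x
  ext μ ν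
  rcases eq_or_ne x 0 with rfl | hx
  · simp [hC0, covariance, diagCoeff, hf0]
  have hs : ‖x‖ ≠ 0 := norm_ne_zero_iff.2 hx
  rw [hCx x hx, covariance, Matrix.of_apply, diagCoeff, dslope_deriv_of_ne hf'0 hs]
  field_simp
  ring

theorem eigenvalue_of_two_smul_relations {V : Type*} [AddCommGroup V] [Module ℝ V]
    {E l lam : ℝ} {a b : V} (hE : 0 < E) (hl : 0 < l) (ha : a ≠ 0)
    (hab : (2 * lam) • a = (2 * E / 3) • b) (hba : (2 * lam) • b = (10 * E / (3 * l ^ 2)) • a) :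
    (lam = Real.sqrt 5 * E / (3 * l) ∨ lam = -(Real.sqrt 5 * E / (3 * l))) ∧
      b = (3 * lam / E) • a := by
  have hb : b = (3 * lam / E) • a := by
    rw [← inv_smul_smul₀ (by positivity : 2 * E / 3 ≠ 0) b, ← hab, smul_smul]
    congr 1
    field_simp
  refine ⟨?_, hb⟩
  rw [hb, smul_smul] at hba
  have hsq : lam ^ 2 = (Real.sqrt 5 * E / (3 * l)) ^ 2 := by
    have := smul_left_injective ℝ ha hba
    rw [div_pow, mul_pow, Real.sq_sqrt (by norm_num)]
    field_simp at this ⊢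
    linarith
  exact sq_eq_sq_iff_eq_or_eq_neg.1 hsq

theorem stmt_17_general (E l : ℝ) (hE : 0 < E) (hl : 0 < l)
    (f : ℝ → ℝ) (hf : ContDiff ℝ 3 f) (hfeven : ∀ s, f (-s) = f s)
    (hf0 : f 0 = 1) (hf'' : deriv (deriv f) 0 = -1 / l ^ 2)
    (C : EuclideanSpace ℝ (Fin 3) → Matrix (Fin 3) (Fin 3) ℝ)
    (hC0 : ∀ μ ν : Fin 3, C 0 μ ν = 2 * E / 3 * (if μ = ν then 1 else 0))
    (hCx : ∀ x : EuclideanSpace ℝ (Fin 3), x ≠ 0 → ∀ μ ν : Fin 3,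
      C x μ ν = 2 * E / 3 * f ‖x‖ * (if μ = ν then 1 else 0)
        + E / 3 * ‖x‖ * deriv f ‖x‖ * ((if μ = ν then 1 else 0) - x μ * x ν / ‖x‖ ^ 2))
    (r : ℝ) (hr : 0 < r) (lam : ℝ) (hlam : lam ≠ 0)
    (v : EuclideanSpace ℝ (Fin 3) → EuclideanSpace ℝ (Fin 3))
    (hvnz : ∃ x ∈ Metric.ball (0 : EuclideanSpace ℝ (Fin 3)) r, v x ≠ 0)
    (heq : ∀ x ∈ Metric.ball (0 : EuclideanSpace ℝ (Fin 3)) r, ∀ μ : Fin 3,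
      2 * lam * v x μ
        = (∑ ν : Fin 3, C x μ ν * curl3 v 0 ν)
          - ∑ ν : Fin 3, v 0 ν * curl3 (cvec C μ) x ν) :
    (lam = Real.sqrt 5 * E / (3 * l) ∨ lam = -(Real.sqrt 5 * E / (3 * l))) ∧
    curl3 v 0 = (3 * lam / E) • v 0 := by
  have hf2 : ContDiff ℝ 2 f := hf.of_le (by norm_num)
  have hf'0 := deriv_zero_of_even hfeven
  obtain rfl : C = covariance E f := eq_covariance_of hf0 hf'0 hC0 hCx
  have hvT : ∀ x ∈ Metric.ball 0 r, v x = (2 * lam)⁻¹ • curlOperator (covariance E f) v x := by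
    intro x hx
    ext μ
    simp only [curlOperator, PiLp.smul_apply, smul_eq_mul, ← heq x hx μ]
    field_simp
  have hcurl : (2 * lam) • curl3 v 0 = (10 * E / (3 * l ^ 2)) • v 0 := by
    have hvT' : v =ᶠ[𝓝 0] fun x => (2 * lam)⁻¹ • curlOperator (covariance E f) v x :=
      eventually_of_mem (Metric.ball_mem_nhds 0 hr) hvT
    rw [hvT'.curl3_eq, curl3_const_smul,
      curl3_curlOperator_covariance_zero hf2 hf'0, hf'', smul_inv_smul₀ (by simpa)]
    congr 1
    field_simp
  have hval : (2 * lam) • v 0 = (2 * E / 3) • curl3 v 0 := by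
    rw [hvT 0 (Metric.mem_ball_self hr), smul_inv_smul₀ (by simpa),
      curlOperator_covariance_zero hf2 hf'0, hf0, mul_one]
  have hv0 : v 0 ≠ 0 := by
    intro h0
    have hω : curl3 v 0 = 0 := by simpa [h0, hlam] using hcurl
    obtain ⟨x, hx, hvx⟩ := hvnz
    exact hvx (by rw [hvT x hx]; ext μ; simp [curlOperator, hω, h0])
  exact eigenvalue_of_two_smul_relations hE hl hv0 hval hcurl

/-- Let `E, ℓ > 0`, `f` even, `C³`, `f(0) = 1`, `f''(0) = −1/ℓ²`, and `C` the matrix field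
of the isotropic incompressible covariance. If `r > 0`, `λ ≠ 0`, and `v : B_r(0) → ℝ³` is
differentiable, not identically zero, and satisfies
`2λ v_μ(x) = c_μ(x)·(curl v)(0) − v(0)·(curl c_μ)(x)` on `B_r(0)`, then
`λ = ±√5 E/(3ℓ)` and `(curl v)(0) = (3λ/E) v(0)`. -/
theorem stmt_17 (E l : ℝ) (hE : 0 < E) (hl : 0 < l)
    (f : ℝ → ℝ) (hf : ContDiff ℝ 3 f) (hfeven : ∀ s, f (-s) = f s)
    (hf0 : f 0 = 1) (hf'' : deriv (deriv f) 0 = -1 / l ^ 2)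
    (C : EuclideanSpace ℝ (Fin 3) → Matrix (Fin 3) (Fin 3) ℝ)
    (hC0 : ∀ μ ν : Fin 3, C 0 μ ν = 2 * E / 3 * (if μ = ν then 1 else 0))
    (hCx : ∀ x : EuclideanSpace ℝ (Fin 3), x ≠ 0 → ∀ μ ν : Fin 3,
      C x μ ν = 2 * E / 3 * f ‖x‖ * (if μ = ν then 1 else 0)
        + E / 3 * ‖x‖ * deriv f ‖x‖ * ((if μ = ν then 1 else 0) - x μ * x ν / ‖x‖ ^ 2))
    (r : ℝ) (hr : 0 < r) (lam : ℝ) (hlam : lam ≠ 0)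
    (v : EuclideanSpace ℝ (Fin 3) → EuclideanSpace ℝ (Fin 3))
    (hv : DifferentiableOn ℝ v (Metric.ball 0 r))
    (hvnz : ∃ x ∈ Metric.ball (0 : EuclideanSpace ℝ (Fin 3)) r, v x ≠ 0)
    (heq : ∀ x ∈ Metric.ball (0 : EuclideanSpace ℝ (Fin 3)) r, ∀ μ : Fin 3,
      2 * lam * v x μ
        = (∑ ν : Fin 3, C x μ ν * curl3 v 0 ν)
          - ∑ ν : Fin 3, v 0 ν * curl3 (cvec C μ) x ν) :
    (lam = Real.sqrt 5 * E / (3 * l) ∨ lam = -(Real.sqrt 5 * E / (3 * l))) ∧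
    curl3 v 0 = (3 * lam / E) • v 0 :=
  stmt_17_general E l hE hl f hf hfeven hf0 hf'' C hC0 hCx r hr lam hlam v hvnz heq
end
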